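/- Let φ = (1+√5)/2 and b = (1+φ)/2. The four points (b,b,b), (b,−b,−b), (−b,b,−b), (−b,−b,b) are pairwise at distance √2·(1+φ) (≈ 3.7025), their convex hull contains the twelve points (0, ±1/2, ±φ/2), (±φ/2, 0, ±1/2), (±1/2, ±φ/2, 0) (the vertices of a regular icosahedron of edge 1), and the volume (Lebesgue measure) of this convex hull equals (9+4√5)/3 (≈ 5.9816); i.e. a regular icosahedron of edge 1 is contained in a regular tetrahedron of edge √2·(1+φ). -/

import Mathlib

open MeasureTheory

/-- A point of `ℝ³` (as `EuclideanSpace ℝ (Fin 3)`) from its coordinates. -/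
noncomputable def pt (x y z : ℝ) : EuclideanSpace ℝ (Fin 3) := WithLp.toLp 2 ![x, y, z]

/-- The golden ratio. -/
noncomputable def φ : ℝ := (1 + Real.sqrt 5) / 2

/-- The twelve vertices of a regular icosahedron of edge length 1. -/
noncomputable def icoVerts1 : Set (EuclideanSpace ℝ (Fin 3)) :=
  {pt 0 (1 / 2) (φ / 2), pt 0 (1 / 2) (-(φ / 2)), pt 0 (-(1 / 2)) (φ / 2),
   pt 0 (-(1 / 2)) (-(φ / 2)),
   pt (φ / 2) 0 (1 / 2), pt (φ / 2) 0 (-(1 / 2)), pt (-(φ / 2)) 0 (1 / 2),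
   pt (-(φ / 2)) 0 (-(1 / 2)),
   pt (1 / 2) (φ / 2) 0, pt (1 / 2) (-(φ / 2)) 0, pt (-(1 / 2)) (φ / 2) 0,
   pt (-(1 / 2)) (-(φ / 2)) 0}

/-- For `b`, the tetrahedron vertices `(b,b,b)`, `(b,−b,−b)`, `(−b,b,−b)`, `(−b,−b,b)`. -/
noncomputable def tetVert (b : ℝ) : Fin 4 → EuclideanSpace ℝ (Fin 3) :=
  ![pt b b b, pt b (-b) (-b), pt (-b) b (-b), pt (-b) (-b) b]

/-! Each icosahedron vertex `(x, y, z)` has `|x| + |y| + |z| = (1 + φ) / 2 = b`, so each face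
inequality `±x ± y ± z ≥ -b` of the tetrahedron holds at it.

For the volume, the tetrahedron is an affine image of the corner simplex `{x ≥ 0, ∑ xᵢ ≤ 1}`
of `ℝⁿ`. The `2ⁿ` sign-flipped copies of that simplex tile the cross-polytope `{∑ |xᵢ| ≤ 1}`,
whose volume `2ⁿ / n!` is known (`volume_sum_rpow_le`), so the simplex has volume `1 / n!` and
the tetrahedron has volume `|det| / 3! = 16 b³ / 6 = (1 + φ)³ / 3 = (9 + 4√5) / 3`. -/

open Set

section CornerSimplex

variable {ι : Type*} [Fintype ι]

variable (ι) in
def cornerSimplex : Set (ι → ℝ) := {x | (∀ i, 0 ≤ x i) ∧ ∑ i, x i ≤ 1}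

theorem cornerSimplex_eq_inter :
    cornerSimplex ι = (⋂ i, {x | 0 ≤ x i}) ∩ {x | ∑ i, x i ≤ 1} := by
  ext x
  simp [cornerSimplex]

theorem convex_cornerSimplex : Convex ℝ (cornerSimplex ι) := by
  rw [cornerSimplex_eq_inter]
  refine (convex_iInter fun i => convex_halfSpace_ge (LinearMap.proj i).isLinear 0).inter
    (convex_halfSpace_le ⟨fun x y => ?_, fun c x => ?_⟩ 1)
  · simp [Finset.sum_add_distrib]
  · simp [Finset.mul_sum]

theorem measurableSet_cornerSimplex : MeasurableSet (cornerSimplex ι) := by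
  rw [cornerSimplex_eq_inter]
  exact (MeasurableSet.iInter fun i => measurableSet_le measurable_const
    (measurable_pi_apply i)).inter (measurableSet_le (by fun_prop) measurable_const)

section

variable [DecidableEq ι]

theorem convexHull_insert_zero_range_single :
    convexHull ℝ (insert 0 (range fun i => Pi.single i 1)) = cornerSimplex ι := by
  refine (convexHull_min ?_ convex_cornerSimplex).antisymm fun x ⟨hx₀, hx₁⟩ => ?_
  · rintro _ (rfl | ⟨j, rfl⟩)
    · simp [cornerSimplex]
    · refine ⟨fun i => ?_, by simp⟩
      rcases eq_or_ne i j with rfl | h <;> simp [*]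
  · let w : Option ι → ℝ := fun o => o.elim (1 - ∑ i, x i) x
    let z : Option ι → ι → ℝ := fun o => o.elim 0 fun i => Pi.single i 1
    have hw₀ : ∀ o ∈ Finset.univ, 0 ≤ w o := by rintro (_ | i) - <;> simp [w, *]
    have hw₁ : ∑ o, w o = 1 := by simp [w, Fintype.sum_option]
    have hz : ∀ o ∈ Finset.univ, z o ∈ insert 0 (range fun i => Pi.single i 1) := by
      rintro (_ | i) - <;> simp [z]
    convert (convex_convexHull ℝ _).sum_mem hw₀ hw₁ fun o ho => subset_convexHull ℝ _ (hz o ho)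
    ext i
    simp [w, z, Fintype.sum_option, Finset.sum_apply, Pi.single_apply]

def signFlip (ε : ι → Bool) : (ι → ℝ) →ₗ[ℝ] ι → ℝ :=
  Matrix.toLin' (Matrix.diagonal fun i => if ε i then -1 else 1)

theorem signFlip_apply (ε : ι → Bool) (x : ι → ℝ) (i : ι) :
    signFlip ε x i = if ε i then -x i else x i := by
  split_ifs with h <;> simp [signFlip, Matrix.mulVec_diagonal, h]

theorem abs_det_signFlip (ε : ι → Bool) : |LinearMap.det (signFlip ε)| = 1 := by
  rw [signFlip, LinearMap.det_toLin', Matrix.det_diagonal, Finset.abs_prod]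
  exact Finset.prod_eq_one fun i _ => by split_ifs <;> simp

theorem iUnion_preimage_signFlip_cornerSimplex :
    ⋃ ε, signFlip ε ⁻¹' cornerSimplex ι = {x | ∑ i, |x i| ≤ 1} := by
  ext x
  simp only [mem_iUnion, mem_preimage, cornerSimplex, mem_ofPred_eq, signFlip_apply]
  constructor
  · rintro ⟨ε, hpos, hsum⟩
    refine le_of_eq_of_le (Finset.sum_congr rfl fun i _ => ?_) hsum
    have := hpos i
    split_ifs at this ⊢
    · rw [abs_of_nonpos (by linarith)]
    · rw [abs_of_nonneg this]
  · intro hx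
    refine ⟨fun i => decide (x i < 0), fun i => ?_,
      le_of_eq_of_le (Finset.sum_congr rfl fun i _ => ?_) hx⟩
    · by_cases h : x i < 0
      · simp only [h, decide_true, ↓reduceIte, Left.nonneg_neg_iff, h.le]
      · simpa [h] using not_lt.1 h
    · by_cases h : x i < 0 <;> simp [h, abs_of_neg, abs_of_nonneg, not_lt.1]

theorem aedisjoint_preimage_signFlip_cornerSimplex {ε ε' : ι → Bool} (h : ε ≠ ε') :
    AEDisjoint volume (signFlip ε ⁻¹' cornerSimplex ι) (signFlip ε' ⁻¹' cornerSimplex ι) := by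
  obtain ⟨i, hi⟩ := Function.ne_iff.1 h
  refine measure_mono_null (fun x ⟨hx, hx'⟩ => ?_) (Measure.pi_hyperplane _ i 0)
  have h₁ := hx.1 i
  have h₂ := hx'.1 i
  simp only [signFlip_apply] at h₁ h₂
  change x i = 0
  cases hε : ε i <;> cases hε' : ε' i <;> simp_all <;> linarith

end

theorem volume_cornerSimplex [Nonempty ι] :
    volume (cornerSimplex ι) = ENNReal.ofReal (1 / (Fintype.card ι).factorial) := by
  classical
  have hflip (ε : ι → Bool) :
      volume (signFlip ε ⁻¹' cornerSimplex ι) = volume (cornerSimplex ι) := by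
    rw [Measure.addHaar_preimage_linearMap _ (by simp [← abs_ne_zero, abs_det_signFlip])]
    simp [abs_inv, abs_det_signFlip]
  have htile :
      volume {x : ι → ℝ | ∑ i, |x i| ≤ 1} = 2 ^ Fintype.card ι * volume (cornerSimplex ι) := by
    rw [← iUnion_preimage_signFlip_cornerSimplex, measure_iUnion₀
      (fun ε ε' h => aedisjoint_preimage_signFlip_cornerSimplex h)
      (fun ε => (measurableSet_cornerSimplex.preimage
        (signFlip ε).continuous_of_finiteDimensional.measurable).nullMeasurableSet),
      tsum_fintype]
    simp [hflip]
  have hcross : volume {x : ι → ℝ | ∑ i, |x i| ≤ 1} =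
      2 ^ Fintype.card ι * ENNReal.ofReal (1 / (Fintype.card ι).factorial) := by
    have := volume_sum_rpow_le (ι := ι) le_rfl 1
    simp only [Real.rpow_one, div_one, ENNReal.ofReal_one, one_pow, one_mul] at this
    rw [this, one_add_one_eq_two, Real.Gamma_two, mul_one, Real.Gamma_nat_eq_factorial,
      div_eq_mul_one_div, ENNReal.ofReal_mul (by positivity), ENNReal.ofReal_pow zero_le_two,
      ENNReal.ofReal_ofNat]
  exact (ENNReal.mul_right_inj (by simp) (by simp)).1 (htile.symm.trans hcross)

open Pointwise in
theorem volume_convexHull_insert_range [DecidableEq ι] [Nonempty ι]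
    (p : ι → ℝ) (v : ι → ι → ℝ) :
    volume (convexHull ℝ (insert p (range v))) =
      ENNReal.ofReal (|(Matrix.of fun i j => (v j - p) i).det| / (Fintype.card ι).factorial) := by
  set A := Matrix.of fun i j => (v j - p) i
  have hvert :
      insert p (range v) = p +ᵥ A.toLin' '' insert 0 (range fun i => Pi.single i 1) := by
    rw [image_insert_eq, ← range_comp, vadd_set_insert, ← image_vadd, ← range_comp]
    congr 1
    · simp
    · congr 1
      ext j i
      simp [A]
  rw [hvert, convexHull_vadd, ← LinearMap.image_convexHull, convexHull_insert_zero_range_single,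
    measure_vadd, Measure.addHaar_image_linearMap, LinearMap.det_toLin', volume_cornerSimplex,
    ← ENNReal.ofReal_mul (abs_nonneg _), mul_one_div]

theorem EuclideanSpace.volume_convexHull_eq_ofLp_image (s : Set (EuclideanSpace ℝ ι)) :
    volume (convexHull ℝ s) = volume (convexHull ℝ (WithLp.ofLp '' s)) := by
  rw [← (PiLp.volume_preserving_ofLp ι).measure_preimage
    ((convex_convexHull ℝ _).nullMeasurableSet (μ := volume))]
  have himage : WithLp.ofLp '' convexHull ℝ s = convexHull ℝ (WithLp.ofLp '' s) :=
    (WithLp.linearEquiv 2 ℝ (ι → ℝ)).toLinearMap.image_convexHull s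
  rw [← himage, preimage_image_eq _ (WithLp.ofLp_injective 2)]

theorem EuclideanSpace.volume_convexHull_insert_range [DecidableEq ι] [Nonempty ι]
    (p : EuclideanSpace ℝ ι) (v : ι → EuclideanSpace ℝ ι) :
    volume (convexHull ℝ (insert p (range v))) =
      ENNReal.ofReal (|(Matrix.of fun i j => (v j - p) i).det| / (Fintype.card ι).factorial) := by
  rw [EuclideanSpace.volume_convexHull_eq_ofLp_image, image_insert_eq, ← range_comp]
  exact _root_.volume_convexHull_insert_range p.ofLp fun j => (v j).ofLp

end CornerSimplex

theorem dist_pt (x y z x' y' z' : ℝ) :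
    dist (pt x y z) (pt x' y' z') = √((x - x') ^ 2 + (y - y') ^ 2 + (z - z') ^ 2) := by
  simp [EuclideanSpace.dist_eq, pt, Fin.sum_univ_three, Real.dist_eq, sq_abs]

theorem dist_tetVert {b : ℝ} (hb : 0 ≤ b) {i j : Fin 4} (hij : i ≠ j) :
    dist (tetVert b i) (tetVert b j) = 2 * √2 * b := by
  have hsq : dist (tetVert b i) (tetVert b j) = √(2 * (2 * b) ^ 2) := by
    fin_cases i <;> fin_cases j <;> first
      | exact absurd rfl hij
      | simp only [tetVert, Fin.reduceFinMk, Matrix.cons_val, dist_pt]; congr 1; ring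
  rw [hsq, Real.sqrt_mul zero_le_two, Real.sqrt_sq (by positivity)]
  ring

theorem pt_mem_convexHull_tetVert {b x y z : ℝ} (hb : 0 < b) (h : |x| + |y| + |z| ≤ b) :
    pt x y z ∈ convexHull ℝ (range (tetVert b)) := by
  let w : Fin 4 → ℝ := ![(b + x + y + z) / (4 * b), (b + x - y - z) / (4 * b),
    (b - x + y - z) / (4 * b), (b - x - y + z) / (4 * b)]
  have hw₀ : ∀ i ∈ Finset.univ, 0 ≤ w i := by
    intro i _
    fin_cases i <;> refine div_nonneg ?_ (by positivity) <;>
      linarith [neg_abs_le x, neg_abs_le y, neg_abs_le z, le_abs_self x, le_abs_self y,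
        le_abs_self z]
  have hw₁ : ∑ i, w i = 1 := by
    simp only [Fin.sum_univ_four, Fin.isValue, Matrix.cons_val_zero, Matrix.cons_val_one,
      Matrix.cons_val, w]
    field_simp
    ring
  convert (convex_convexHull ℝ _).sum_mem hw₀ hw₁
    fun i _ => subset_convexHull ℝ _ (mem_range_self i)
  ext k
  fin_cases k <;>
    simp only [pt, tetVert, w, Fin.sum_univ_four, Fin.zero_eta, Fin.mk_one, Fin.reduceFinMk,
      Fin.isValue, Matrix.cons_val_zero, Matrix.cons_val_one, Matrix.cons_val, PiLp.add_apply,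
      PiLp.smul_apply, smul_eq_mul, mul_neg] <;>
    field_simp <;> ring

theorem volume_convexHull_tetVert {b : ℝ} (hb : 0 ≤ b) :
    volume (convexHull ℝ (range (tetVert b))) = ENNReal.ofReal (8 * b ^ 3 / 3) := by
  rw [tetVert, Matrix.range_cons, singleton_union, EuclideanSpace.volume_convexHull_insert_range,
    Matrix.det_fin_three]
  congr 1
  simp only [pt, PiLp.sub_apply, Fin.isValue, Matrix.of_apply, Matrix.cons_val_zero, sub_self,
    Matrix.cons_val_one, mul_zero, Matrix.cons_val, zero_mul, zero_add, sub_zero,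
    Fintype.card_fin]
  rw [show (-b - b) * (-b - b) * (-b - b) + (-b - b) * (-b - b) * (-b - b) = -(16 * b ^ 3) by ring,
    abs_neg, abs_of_nonneg (by positivity)]
  norm_num [Nat.factorial]
  ring

theorem one_add_φ_pow_three : (1 + φ) ^ 3 = 9 + 4 * √5 := by
  have h5 : √5 ^ 2 = 5 := Real.sq_sqrt (by norm_num)
  unfold φ
  linear_combination (9 + √5) / 8 * h5

theorem icoVerts1_subset_convexHull_tetVert :
    icoVerts1 ⊆ convexHull ℝ (range (tetVert ((1 + φ) / 2))) := by
  have hφ : |φ / 2| = φ / 2 := abs_of_pos (by unfold φ; positivity)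
  have hb : 0 < (1 + φ) / 2 := by unfold φ; positivity
  intro p hp
  simp only [icoVerts1, mem_insert_iff, mem_singleton_iff] at hp
  rcases hp with rfl | rfl | rfl | rfl | rfl | rfl | rfl | rfl | rfl | rfl | rfl | rfl <;>
    refine pt_mem_convexHull_tetVert hb (le_of_eq ?_) <;>
    simp only [abs_neg, abs_zero, hφ, abs_of_pos (one_half_pos (α := ℝ))] <;> ring

theorem minimal_regular_tetrahedron_containing_unit_icosahedron :
    (∀ i j, i ≠ j →
      dist (tetVert ((1 + φ) / 2) i) (tetVert ((1 + φ) / 2) j) = Real.sqrt 2 * (1 + φ)) ∧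
    icoVerts1 ⊆ convexHull ℝ (Set.range (tetVert ((1 + φ) / 2))) ∧
    volume (convexHull ℝ (Set.range (tetVert ((1 + φ) / 2))))
      = ENNReal.ofReal ((9 + 4 * Real.sqrt 5) / 3) := by
  have hb : 0 ≤ (1 + φ) / 2 := by unfold φ; positivity
  refine ⟨fun i j hij => ?_, icoVerts1_subset_convexHull_tetVert, ?_⟩
  · rw [dist_tetVert hb hij]
    ring
  · rw [volume_convexHull_tetVert hb, ← one_add_φ_pow_three]
    congr 1
    ring
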